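/- Fix integers k, r ≥ 2 with (r, k) ≠ (2, 2), let h_{r,k}(μ) = μ / f_{k−1}(μ)^{r−1}, and suppose μ > 0 is a critical point of h_{r,k} (the derivative of h_{r,k} at μ is 0). Let ζ = g_k(μ) = μ·f_{k−1}(μ)/f_k(μ) (the ratio r·β/α for α = f_k(μ) and β = (1/r)·μ·f_{k−1}(μ)). Then k < ζ < r(k−1). -/

import Mathlib

/-!
Write `T_k(μ) = e^μ f_k(μ) = ∑_{i ≥ 0} μ^{k+i}/(k+i)!` and `u_k = μ^k/k!`, so that
`T_k = u_k + T_{k+1}`, `T_{k+1}' = T_k` and `(k+1) u_{k+1} = μ u_k`. With `m = k - 1` the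
critical-point equation says `T_m = C u_m` for `C = (r-1) m`, hence `T_{m+1} = (C-1) u_m`.

The lower bound `ζ > m + 1` holds for every `μ > 0`: comparing `T_{m+1}` with `μ T_m` term by
term gives `(m+1) T_{m+1} < μ T_m`.

The upper bound comes from the Turán-type inequality `m T_{m+1}^2 < (m+1) T_m T_{m+2}`, proved
by comparing the two Cauchy products coefficientwise after pairing the index `(i, j)` with
`(j, i)`. Rewritten with the recurrences it says `ζ < m + T_m / u_m`, and at the critical point
`m + T_m / u_m = m + C = r m`.
-/

/-- `fPo k μ = e^{-μ} ∑_{i ≥ k} μ^i / i!`, the probability that a Poisson random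
variable with mean `μ` is at least `k`. -/
noncomputable def fPo (k : ℕ) (μ : ℝ) : ℝ :=
  Real.exp (-μ) * ∑' i : ℕ, μ ^ (k + i) / (Nat.factorial (k + i) : ℝ)

/-- `hFun r k μ = μ / f_{k-1}(μ)^{r-1}`. -/
noncomputable def hFun (r k : ℕ) (μ : ℝ) : ℝ := μ / (fPo (k - 1) μ) ^ (r - 1)

open Finset Real
open scoped Nat

noncomputable def expTail (k : ℕ) (μ : ℝ) : ℝ := ∑' i : ℕ, μ ^ (k + i) / (k + i)!

theorem fPo_eq_exp_neg_mul_expTail (k : ℕ) (μ : ℝ) : fPo k μ = exp (-μ) * expTail k μ := rfl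

theorem summable_pow_add_div_factorial (k : ℕ) (μ : ℝ) :
    Summable fun i : ℕ => μ ^ (k + i) / (k + i)! := by
  simpa only [add_comm k] using (summable_nat_add_iff k).2 (Real.summable_pow_div_factorial μ)

theorem expTail_pos (k : ℕ) {μ : ℝ} (hμ : 0 < μ) : 0 < expTail k μ :=
  (summable_pow_add_div_factorial k μ).tsum_pos (fun _ => by positivity) 0 (by positivity)

theorem expTail_eq_add_expTail_succ (k : ℕ) (μ : ℝ) :
    expTail k μ = μ ^ k / k ! + expTail (k + 1) μ := by
  simp only [expTail, (summable_pow_add_div_factorial k μ).tsum_eq_zero_add, add_zero,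
    ← add_assoc, add_right_comm k]

theorem expTail_eq_exp_sub_sum (k : ℕ) (μ : ℝ) :
    expTail k μ = exp μ - ∑ i ∈ range k, μ ^ i / i ! := by
  rw [eq_sub_iff_add_eq', expTail, Real.exp_eq_exp_ℝ, NormedSpace.exp_eq_tsum_div]
  simpa only [add_comm k] using
    (Real.summable_pow_div_factorial μ).sum_add_tsum_nat_add k

theorem succ_mul_pow_succ_div_factorial (n : ℕ) (μ : ℝ) :
    (n + 1) * (μ ^ (n + 1) / (n + 1)!) = μ * (μ ^ n / n !) := by
  rw [Nat.factorial_succ]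
  push_cast
  field_simp
  ring

theorem hasDerivAt_sum_range_pow_div_factorial (n : ℕ) (x : ℝ) :
    HasDerivAt (fun y : ℝ => ∑ i ∈ range (n + 1), y ^ i / i !) (∑ i ∈ range n, x ^ i / i !) x := by
  induction n with
  | zero => simpa using hasDerivAt_const x (1 : ℝ)
  | succ n ih =>
    have hterm : HasDerivAt (fun y : ℝ => y ^ (n + 1) / (n + 1)!) (x ^ n / n !) x := by
      refine ((hasDerivAt_pow (n + 1) x).div_const ((n + 1)! : ℝ)).congr_deriv ?_
      rw [Nat.factorial_succ]
      push_cast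
      field_simp
    simpa only [sum_range_succ _ (n + 1), sum_range_succ _ n] using ih.fun_add hterm

theorem hasDerivAt_expTail_succ (k : ℕ) (μ : ℝ) :
    HasDerivAt (expTail (k + 1)) (expTail k μ) μ := by
  rw [funext (expTail_eq_exp_sub_sum (k + 1)), expTail_eq_exp_sub_sum]
  exact (hasDerivAt_exp μ).sub (hasDerivAt_sum_range_pow_div_factorial k μ)

theorem hasDerivAt_fPo_succ (k : ℕ) (μ : ℝ) :
    HasDerivAt (fPo (k + 1)) (exp (-μ) * (μ ^ k / k !)) μ := by
  have h := ((hasDerivAt_neg μ).exp).fun_mul (hasDerivAt_expTail_succ k μ)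
  rw [expTail_eq_add_expTail_succ k] at h
  exact h.congr_deriv (by ring)

theorem fPo_pos (k : ℕ) {μ : ℝ} (hμ : 0 < μ) : 0 < fPo k μ :=
  mul_pos (exp_pos _) (expTail_pos k hμ)

theorem mul_fPo_div_fPo_succ (k : ℕ) (μ : ℝ) :
    μ * fPo k μ / fPo (k + 1) μ = μ * expTail k μ / expTail (k + 1) μ := by
  rw [fPo_eq_exp_neg_mul_expTail, fPo_eq_exp_neg_mul_expTail, mul_left_comm,
    mul_div_mul_left _ _ (exp_pos _).ne']

theorem eq_mul_of_deriv_div_pow_eq_zero {F : ℝ → ℝ} {F' μ : ℝ} (n : ℕ)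
    (hF : HasDerivAt F F' μ) (hpos : 0 < F μ) (hcrit : deriv (fun x => x / F x ^ n) μ = 0) :
    F μ = n * μ * F' := by
  obtain _ | n := n
  · simp at hcrit
  have hd := (hasDerivAt_id' μ).fun_div (hF.fun_pow (n + 1)) (pow_pos hpos _).ne'
  rw [hd.deriv, div_eq_zero_iff, or_iff_left (pow_pos (pow_pos hpos _) _).ne',
    Nat.add_sub_cancel] at hcrit
  refine mul_left_cancel₀ (pow_pos hpos n).ne' ?_
  linear_combination hcrit

theorem expTail_eq_of_deriv_hFun_eq_zero (n r : ℕ) (hr : 1 ≤ r) {μ : ℝ} (hμ : 0 < μ)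
    (hcrit : deriv (hFun r (n + 2)) μ = 0) :
    expTail (n + 1) μ = ((r : ℝ) - 1) * (n + 1) * (μ ^ (n + 1) / (n + 1)!) := by
  have h := eq_mul_of_deriv_div_pow_eq_zero (r - 1) (hasDerivAt_fPo_succ n μ) (fPo_pos _ hμ) hcrit
  rw [fPo_eq_exp_neg_mul_expTail, Nat.cast_sub hr, Nat.cast_one] at h
  refine mul_left_cancel₀ (exp_pos (-μ)).ne' ?_
  linear_combination h - ((r : ℝ) - 1) * exp (-μ) * succ_mul_pow_succ_div_factorial n μ

theorem succ_mul_expTail_succ_lt (k : ℕ) {μ : ℝ} (hμ : 0 < μ) :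
    (k + 1) * expTail (k + 1) μ < μ * expTail k μ := by
  have hterm (i : ℕ) : μ * (μ ^ (k + i) / (k + i)!)
      = ((k + i : ℕ) + 1 : ℝ) * (μ ^ (k + 1 + i) / (k + 1 + i)!) := by
    rw [add_right_comm k 1 i]
    exact (succ_mul_pow_succ_div_factorial (k + i) μ).symm
  rw [expTail, expTail, ← tsum_mul_left, ← tsum_mul_left]
  refine Summable.tsum_lt_tsum (i := 1) (fun i => ?_) ?_
    ((summable_pow_add_div_factorial _ μ).mul_left _)
    ((summable_pow_add_div_factorial _ μ).mul_left _)
  · rw [hterm]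
    gcongr
    linarith [(i.cast_nonneg : (0 : ℝ) ≤ i)]
  · rw [hterm]
    gcongr
    linarith

theorem succ_lt_mul_expTail_div_expTail_succ (k : ℕ) {μ : ℝ} (hμ : 0 < μ) :
    (k + 1 : ℝ) < μ * expTail k μ / expTail (k + 1) μ := by
  rw [lt_div_iff₀ (expTail_pos _ hμ)]
  exact succ_mul_expTail_succ_lt k hμ

theorem two_mul_lt_succ_mul_div_add_div {k x y : ℝ} (hk : 0 ≤ k) (hx : k + 1 ≤ x)
    (hy : k + 1 ≤ y) : 2 * k < (k + 1) * (x / (y + 1) + y / (x + 1)) := by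
  rw [div_add_div _ _ (by linarith) (by linarith), mul_div_assoc', lt_div_iff₀ (by nlinarith)]
  nlinarith [mul_nonneg (sub_nonneg.2 hx) (by linarith : (0 : ℝ) ≤ y),
    mul_nonneg (sub_nonneg.2 hy) (by linarith : (0 : ℝ) ≤ x), sq_nonneg (x - y)]

theorem two_mul_pow_div_factorial_mul_lt (k i j : ℕ) {μ : ℝ} (hμ : 0 < μ) :
    2 * k * (μ ^ (k + i + 1) / (k + i + 1)! * (μ ^ (k + j + 1) / (k + j + 1)!))
      < (k + 1) * (μ ^ (k + i) / (k + i)! * (μ ^ (k + j + 2) / (k + j + 2)!)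
        + μ ^ (k + j) / (k + j)! * (μ ^ (k + i + 2) / (k + i + 2)!)) := by
  have hU := succ_mul_pow_succ_div_factorial (k + i) μ
  have hV := succ_mul_pow_succ_div_factorial (k + j) μ
  have hU' := succ_mul_pow_succ_div_factorial (k + i + 1) μ
  have hV' := succ_mul_pow_succ_div_factorial (k + j + 1) μ
  push_cast at hU hV hU' hV'
  set U := μ ^ (k + i + 1) / ((k + i + 1)! : ℝ)
  set V := μ ^ (k + j + 1) / ((k + j + 1)! : ℝ)
  rw [eq_div_of_mul_eq hμ.ne' ((mul_comm _ μ).trans hU.symm),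
    eq_div_of_mul_eq hμ.ne' ((mul_comm _ μ).trans hV.symm),
    eq_div_of_mul_eq (by positivity) ((mul_comm _ _).trans hU'),
    eq_div_of_mul_eq (by positivity) ((mul_comm _ _).trans hV')]
  have hUV : 0 < U * V := by positivity
  clear_value U V
  have key := two_mul_lt_succ_mul_div_add_div (k.cast_nonneg : (0 : ℝ) ≤ k)
    (x := k + i + 1) (y := k + j + 1) (by simp) (by simp)
  calc 2 * k * (U * V) = U * V * (2 * k) := by ring
    _ < U * V * _ := mul_lt_mul_of_pos_left key hUV
    _ = _ := by field_simp

theorem sum_antidiagonal_mul_lt (k n : ℕ) {μ : ℝ} (hμ : 0 < μ) :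
    k * ∑ p ∈ antidiagonal n,
        μ ^ (k + 1 + p.1) / (k + 1 + p.1)! * (μ ^ (k + 1 + p.2) / (k + 1 + p.2)!)
      < (k + 1) * ∑ p ∈ antidiagonal n,
        μ ^ (k + p.1) / (k + p.1)! * (μ ^ (k + 2 + p.2) / (k + 2 + p.2)!) := by
  have hswap := Nat.sum_antidiagonal_swap (n := n)
    (f := fun p => μ ^ (k + p.1) / (k + p.1)! * (μ ^ (k + p.2 + 2) / (k + p.2 + 2)!))
  simp only [Prod.fst_swap, Prod.snd_swap] at hswap
  refine lt_of_mul_lt_mul_left ?_ (zero_le_two (α := ℝ))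
  calc 2 * (k * ∑ p ∈ antidiagonal n,
        μ ^ (k + 1 + p.1) / (k + 1 + p.1)! * (μ ^ (k + 1 + p.2) / (k + 1 + p.2)!))
      = ∑ p ∈ antidiagonal n, 2 * k *
        (μ ^ (k + p.1 + 1) / (k + p.1 + 1)! * (μ ^ (k + p.2 + 1) / (k + p.2 + 1)!)) := by
        simp only [mul_sum, add_right_comm k 1, mul_assoc]
    _ < ∑ p ∈ antidiagonal n, (k + 1) *
        (μ ^ (k + p.1) / (k + p.1)! * (μ ^ (k + p.2 + 2) / (k + p.2 + 2)!)
          + μ ^ (k + p.2) / (k + p.2)! * (μ ^ (k + p.1 + 2) / (k + p.1 + 2)!)) :=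
        sum_lt_sum_of_nonempty ⟨(n, 0), by simp⟩
          fun p _ => two_mul_pow_div_factorial_mul_lt k p.1 p.2 hμ
    _ = 2 * ((k + 1) * ∑ p ∈ antidiagonal n,
        μ ^ (k + p.1) / (k + p.1)! * (μ ^ (k + 2 + p.2) / (k + 2 + p.2)!)) := by
        simp only [← mul_sum, sum_add_distrib, add_right_comm k 2, hswap]
        ring

theorem mul_expTail_succ_sq_lt (k : ℕ) {μ : ℝ} (hμ : 0 < μ) :
    k * expTail (k + 1) μ ^ 2 < (k + 1) * (expTail k μ * expTail (k + 2) μ) := by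
  have hs (j : ℕ) := summable_pow_add_div_factorial j μ
  have hprod (j l : ℕ) := (hs j).mul_of_nonneg (hs l) (fun _ => by positivity)
    (fun _ => by positivity)
  rw [sq, expTail, expTail, expTail, (hs _).tsum_mul_tsum_eq_tsum_sum_antidiagonal (hs _) (hprod _ _),
    (hs _).tsum_mul_tsum_eq_tsum_sum_antidiagonal (hs _) (hprod _ _),
    ← tsum_mul_left, ← tsum_mul_left]
  refine Summable.tsum_lt_tsum_of_nonneg (fun _ => by positivity)
    (fun n => (sum_antidiagonal_mul_lt k n hμ).le) (sum_antidiagonal_mul_lt k 0 hμ) ?_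
  exact (summable_sum_mul_antidiagonal_of_summable_mul
    (f := fun i => μ ^ (k + i) / (k + i)!) (g := fun i => μ ^ (k + 2 + i) / (k + 2 + i)!)
    (hprod k (k + 2))).mul_left _

theorem mul_expTail_div_expTail_succ_lt (k : ℕ) {μ : ℝ} (hμ : 0 < μ) :
    μ * expTail k μ / expTail (k + 1) μ < k + expTail k μ / (μ ^ k / k !) := by
  have hturan := mul_expTail_succ_sq_lt k hμ
  have h₀ := expTail_eq_add_expTail_succ k μ
  have h₁ : expTail (k + 1) μ = μ ^ (k + 1) / (k + 1)! + expTail (k + 2) μ :=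
    expTail_eq_add_expTail_succ (k + 1) μ
  have hterm := succ_mul_pow_succ_div_factorial k μ
  have hA : 0 < μ ^ k / k ! := by positivity
  rw [add_div' _ _ _ hA.ne', div_lt_div_iff₀ (expTail_pos _ hμ) hA]
  linear_combination hturan + k * expTail (k + 1) μ * h₀ - (k + 1) * expTail k μ * h₁
    - expTail k μ * hterm

theorem stmt12_general (k r : ℕ) (hk : 2 ≤ k) (hr : 2 ≤ r)
    (μ : ℝ) (hμ : 0 < μ) (hcrit : deriv (hFun r k) μ = 0) :
    (k : ℝ) < μ * fPo (k - 1) μ / fPo k μ ∧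
      μ * fPo (k - 1) μ / fPo k μ < (r : ℝ) * ((k : ℝ) - 1) := by
  obtain ⟨n, rfl⟩ : ∃ n, k = n + 2 := ⟨k - 2, by omega⟩
  have hcrit' := expTail_eq_of_deriv_hFun_eq_zero n r (by omega) hμ hcrit
  rw [show n + 2 - 1 = n + 1 from rfl, mul_fPo_div_fPo_succ]
  push_cast
  constructor
  · exact_mod_cast succ_lt_mul_expTail_div_expTail_succ (n + 1) hμ
  · calc _ < ((n + 1 : ℕ) : ℝ) + expTail (n + 1) μ / (μ ^ (n + 1) / (n + 1)!) :=
          mul_expTail_div_expTail_succ_lt (n + 1) hμ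
      _ = r * (n + 2 - 1) := by
          rw [hcrit', mul_div_cancel_right₀ _ (by positivity)]
          push_cast
          ring

theorem stmt12 (k r : ℕ) (hk : 2 ≤ k) (hr : 2 ≤ r) (hne : ¬(r = 2 ∧ k = 2))
    (μ : ℝ) (hμ : 0 < μ) (hcrit : deriv (hFun r k) μ = 0) :
    (k : ℝ) < μ * fPo (k - 1) μ / fPo k μ ∧
      μ * fPo (k - 1) μ / fPo k μ < (r : ℝ) * ((k : ℝ) - 1) :=
  stmt12_general k r hk hr μ hμ hcrit
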